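/- Let 0 < τ₁+t₁ ≤ ... ≤ τₙ+tₙ, p_j ∈ (0,1], S ≥ 1, and define t(m) = (Σ_{j=1}^m p_j/(τ_j+t_j))^{-1} (S + Σ_{j=1}^m p_j). Let m* be the smallest minimizer of t(m) over m ∈ [n]. Then τ_{m*} + t_{m*} < t(m*); equivalently, b_i = t(m*)/(τ_i+t_i) − 1 > 0 for all i ≤ m*. -/
import Mathlib


open Finset

/-- positivity of the optimal batch allocation in MindFlayer SGD.
Here `a i = τ_i + t_i` (sorted increasingly), and `tf m` is the quantity
`t(m) = (Σ_{j≤m} p_j/a_j)⁻¹ (S + Σ_{j≤m} p_j)`; `mstar` is the smallest minimizer.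
Then `a mstar < tf mstar`, equivalently `b_i = tf mstar / a_i - 1 > 0` for `i ≤ mstar`. -/
theorem mindflayer_allocation_positive
    (n : ℕ) [NeZero n] (a p : Fin n → ℝ)
    (ha : ∀ i, 0 < a i) (hmono : Monotone a)
    (hp : ∀ i, 0 < p i ∧ p i ≤ 1)
    (S : ℝ) (hS : 1 ≤ S)
    (tf : Fin n → ℝ)
    (htf : ∀ m, tf m = (∑ j ∈ Iic m, p j / a j)⁻¹ * (S + ∑ j ∈ Iic m, p j))
    (mstar : Fin n)
    (hmin : ∀ m, tf mstar ≤ tf m)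
    (hsmallest : ∀ m, tf m = tf mstar → mstar ≤ m) :
    a mstar < tf mstar ∧ ∀ i ≤ mstar, 0 < tf mstar / a i - 1 := by
  have key : a mstar < tf mstar := by
    by_cases h0 : (mstar : ℕ) = 0
    · -- base case: Iic mstar = {mstar}
      have hIic : Iic mstar = {mstar} := by
        ext j
        simp only [mem_Iic, mem_singleton, Fin.le_def, Fin.ext_iff]
        omega
      rw [htf, hIic]
      simp only [sum_singleton]
      have hpm := (hp mstar).1
      have ham := ha mstar
      rw [div_eq_mul_inv, mul_inv, inv_inv]
      have h1 : (p mstar)⁻¹ * a mstar * (S + p mstar)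
          = a mstar * ((S + p mstar) / p mstar) := by ring
      rw [h1]
      have : 1 < (S + p mstar) / p mstar := by
        rw [lt_div_iff₀ hpm]
        nlinarith
      nlinarith
    · -- step case
      have hlt : 0 < (mstar : ℕ) := Nat.pos_of_ne_zero h0
      set prev : Fin n := ⟨(mstar : ℕ) - 1, by omega⟩ with hprev
      have hprevlt : prev < mstar := by
        simp only [Fin.lt_def, hprev]; omega
      have hIio : Iio mstar = Iic prev := by
        ext j
        simp only [mem_Iio, mem_Iic, Fin.lt_def, Fin.le_def, hprev]
        omega
      have hsplit : ∀ f : Fin n → ℝ,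
          ∑ j ∈ Iic mstar, f j = f mstar + ∑ j ∈ Iic prev, f j := by
        intro f
        rw [← hIio, ← Finset.Iio_insert, Finset.sum_insert (by simp)]
      set A : ℝ := ∑ j ∈ Iic prev, p j / a j with hA
      set B : ℝ := S + ∑ j ∈ Iic prev, p j with hB
      set q : ℝ := p mstar with hq
      set c : ℝ := a mstar with hc
      have hApos : 0 < A := by
        apply Finset.sum_pos
        · intro j _; exact div_pos (hp j).1 (ha j)
        · exact ⟨prev, mem_Iic.2 le_rfl⟩
      have hqpos : 0 < q := (hp mstar).1
      have hcpos : 0 < c := ha mstar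
      have hBpos : 0 < B := by
        have : (0:ℝ) ≤ ∑ j ∈ Iic prev, p j :=
          Finset.sum_nonneg fun j _ => (hp j).1.le
        simp only [hB]; linarith
      have htfm : tf mstar = (A + q / c)⁻¹ * (B + q) := by
        rw [htf mstar, hsplit (fun j => p j / a j), hsplit p, hA, hB, hq, hc]
        simp only [div_eq_mul_inv]
        ring_nf
      have htfp : tf prev = A⁻¹ * B := by
        rw [htf prev]
      have hA'pos : 0 < A + q / c := by positivity
      have hstrict : tf mstar < tf prev := by
        rcases lt_or_eq_of_le (hmin prev) with h | h
        · exact h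
        · exact absurd (hsmallest prev h.symm) (not_le.2 hprevlt)
      rw [htfm, htfp] at hstrict
      rw [inv_mul_eq_div, inv_mul_eq_div, div_lt_div_iff₀ hA'pos hApos] at hstrict
      have hqc : c * (q / c) = q := mul_div_cancel₀ q (ne_of_gt hcpos)
      -- from (B+q)*A < B*(A+q/c) derive c*A < B
      have hcAB : c * A < B := by
        have h2 : q * A * c < B * q := by nlinarith
        nlinarith
      rw [htfm, inv_mul_eq_div, lt_div_iff₀ hA'pos]
      nlinarith
  refine ⟨key, fun i hi => ?_⟩
  have hai : a i ≤ a mstar := hmono hi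
  have : 1 < tf mstar / a i := by
    rw [lt_div_iff₀ (ha i)]
    nlinarith [ha i]
  linarith
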